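/- arXiv:2102.06941 — 5 statements merged into one kernel-verified Lean document; each statement's English description precedes it below -/
import Mathlib

section
/- Let S/R be an extension of integral domains with S finitely generated as an R-algebra, and suppose that Frac(S) = Frac(R)(α) is a simple algebraic extension of Frac(R). Then there exists a subring T of Frac(S) containing S such that T is generated over R by a single element. -/
open Polynomial

/-!
Scaling `α` by a denominator gives an element `γ` integral over `R` with `K[γ] = L`, and clearing
the denominators of finitely many generators of `S` gives `S ⊆ R[γ, 1/d]` for some `d ≠ 0` in `R`.
This ring is generated by the single element `β = γ + 1/d`: the element `dβ - 1 = dγ` of `R[β]` is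
a root of a monic polynomial whose lower coefficients are divisible by `d`, so modulo `d` it is
both nilpotent and congruent to `-1`, which forces `d` to be a unit of `R[β]`.
-/

theorem exists_isIntegral_adjoin_eq_top {R K L : Type*} [CommRing R] [Field K] [Field L]
    (M : Submonoid R) [Algebra R K] [IsLocalization M K] [Algebra R L] [Algebra K L]
    [IsScalarTower R K L] {α : L} (halg : IsAlgebraic K α)
    (hgen : IntermediateField.adjoin K {α} = ⊤) :
    ∃ γ : L, IsIntegral R γ ∧ Algebra.adjoin K {γ} = ⊤ := by
  obtain ⟨m, hm⟩ := halg.isIntegral.exists_multiple_integral_of_isLocalization M α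
  refine ⟨m • α, hm, ?_⟩
  have hα : α ∈ IntermediateField.adjoin K {m • α} := by
    have hα' : (algebraMap R K m)⁻¹ • (m • α) = α := by
      rw [Submonoid.smul_def, ← algebraMap_smul K (m : R) α, smul_smul,
        inv_mul_cancel₀ (IsLocalization.map_units K m).ne_zero, one_smul]
    convert (IntermediateField.adjoin K {m • α}).smul_mem
      (IntermediateField.mem_adjoin_simple_self K (m • α)) (x := (algebraMap R K m)⁻¹)
    exact hα'.symm
  have htop : IntermediateField.adjoin K {m • α} = ⊤ := by
    rw [eq_top_iff, ← hgen]
    exact IntermediateField.adjoin_simple_le_iff.mpr hα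
  rw [← IntermediateField.adjoin_simple_toSubalgebra_of_isAlgebraic hm.tower_top.isAlgebraic,
    htop, IntermediateField.top_toSubalgebra]

theorem IsLocalization.exists_smul_mem_adjoin_of_mem_adjoin {R K L : Type*} [CommRing R]
    [CommRing K] [CommRing L] (M : Submonoid R) [Algebra R K] [IsLocalization M K]
    [Algebra R L] [Algebra K L] [IsScalarTower R K L] {s : Set L} {x : L}
    (hx : x ∈ Algebra.adjoin K s) : ∃ m : M, (m : R) • x ∈ Algebra.adjoin R s := by
  rw [← Subalgebra.mem_toSubmodule, Algebra.adjoin_eq_span, IsLocalization.mem_span_iff M] at hx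
  obtain ⟨y, hy, m, rfl⟩ := hx
  refine ⟨m, ?_⟩
  have hcancel : (m : R) • IsLocalization.mk' K (1 : R) m = 1 := by
    rw [Algebra.smul_def, IsLocalization.mk'_spec', map_one]
  rw [← smul_assoc, hcancel, one_smul]
  rwa [← Subalgebra.mem_toSubmodule, Algebra.adjoin_eq_span]

theorem Algebra.FiniteType.exists_forall_mem_adjoin_insert_inv {R S L : Type*} [CommRing R]
    [CommRing S] [Field L] [Algebra R S] [Algebra R L] [Algebra S L] [IsScalarTower R S L]
    [Algebra.FiniteType R S] {X : Set L}
    (h : ∀ s : S, ∃ d : R, algebraMap R L d ≠ 0 ∧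
      algebraMap R L d * algebraMap S L s ∈ adjoin R X) :
    ∃ d : R, algebraMap R L d ≠ 0 ∧
      ∀ s : S, algebraMap S L s ∈ adjoin R (insert (algebraMap R L d)⁻¹ X) := by
  classical
  choose den hden0 hden using h
  obtain ⟨t, ht⟩ := Algebra.FiniteType.out (R := R) (A := S)
  set D := ∏ y ∈ t, den y
  have hD : algebraMap R L D ≠ 0 := by
    simpa [D, Finset.prod_ne_zero_iff] using fun y _ => hden0 y
  refine ⟨D, hD, fun s => ?_⟩
  have hs : algebraMap S L s ∈ (adjoin R (t : Set S)).map (IsScalarTower.toAlgHom R S L) :=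
    ⟨s, ht ▸ Algebra.mem_top, rfl⟩
  rw [AlgHom.map_adjoin] at hs
  refine adjoin_le ?_ hs
  rintro _ ⟨y, hy, rfl⟩
  have hy' : algebraMap S L y = (algebraMap R L D)⁻¹ *
      (algebraMap R L (∏ z ∈ t.erase y, den z) * (algebraMap R L (den y) * algebraMap S L y)) := by
    rw [← mul_assoc (algebraMap R L _), ← map_mul, mul_comm (∏ z ∈ t.erase y, den z),
      Finset.mul_prod_erase t den hy, inv_mul_cancel_left₀ hD]
  rw [SetLike.mem_coe, IsScalarTower.coe_toAlgHom', hy']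
  exact mul_mem (subset_adjoin (Set.mem_insert _ _))
    (mul_mem (Subalgebra.algebraMap_mem _ _) (adjoin_mono (Set.subset_insert _ _) (hden y)))

theorem isUnit_algebraMap_of_aeval_scaleRoots_eq_zero {R A : Type*} [CommRing R] [CommRing A]
    [Algebra R A] {f : R[X]} (hf : f.Monic) {d : R} {β : A}
    (hβ : aeval (algebraMap R A d * β - 1) (f.scaleRoots d) = 0) :
    IsUnit (algebraMap R A d) := by
  set I := Ideal.span {algebraMap R A d}
  obtain ⟨y, -, hy⟩ := (scaleRoots.isWeaklyEisensteinAt f (Submodule.mem_span_singleton_self d)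
    ).exists_mem_adjoin_mul_eq_pow_natDegree hβ ((monic_scaleRoots_iff d).mpr hf)
  have hd : Ideal.Quotient.mk I (algebraMap R A d) = 0 :=
    Ideal.Quotient.eq_zero_iff_mem.mpr (Ideal.mem_span_singleton_self _)
  have hI : (0 : A ⧸ I) = 1 := by
    have hy' := congrArg (Ideal.Quotient.mk I) hy
    simp only [map_mul, map_pow, map_sub, map_one, hd, zero_mul, zero_sub] at hy'
    exact isUnit_zero_iff.mp (hy' ▸ isUnit_neg_one.pow _)
  exact Ideal.span_singleton_eq_top.mp (Ideal.Quotient.zero_eq_one_iff.mp hI)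

theorem IsIntegral.adjoin_add_inv_eq_adjoin_pair {R L : Type*} [CommRing R] [Field L]
    [Algebra R L] {γ : L} (hγ : IsIntegral R γ) {d : R} (hd : algebraMap R L d ≠ 0) :
    Algebra.adjoin R {γ + (algebraMap R L d)⁻¹} = Algebra.adjoin R {(algebraMap R L d)⁻¹, γ} := by
  set A := Algebra.adjoin R {γ + (algebraMap R L d)⁻¹}
  have hβ : γ + (algebraMap R L d)⁻¹ ∈ A := Algebra.self_mem_adjoin_singleton R _
  have hinv : (algebraMap R L d)⁻¹ ∈ A := by
    obtain ⟨f, hf, hfγ⟩ := hγ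
    have hroot : aeval (algebraMap R A d * ⟨_, hβ⟩ - 1) (f.scaleRoots d) = 0 := by
      have hval : ((algebraMap R A d * ⟨_, hβ⟩ - 1 : A) : L) = algebraMap R L d * γ := by
        simp [mul_add, hd]
      apply Subtype.val_injective
      rw [aeval_subalgebra_coe, hval, scaleRoots_aeval_eq_zero hfγ, ZeroMemClass.coe_zero]
    obtain ⟨v, hv⟩ := (isUnit_algebraMap_of_aeval_scaleRoots_eq_zero hf hroot).exists_left_inv
    have hv' : (v : L) * algebraMap R L d = 1 := congrArg Subtype.val hv
    rw [← eq_inv_of_mul_eq_one_left hv']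
    exact v.2
  refine le_antisymm (Algebra.adjoin_le ?_) (Algebra.adjoin_le ?_)
  · exact Set.singleton_subset_iff.mpr (add_mem (Algebra.subset_adjoin (by simp))
      (Algebra.subset_adjoin (by simp)))
  · refine Set.insert_subset hinv (Set.singleton_subset_iff.mpr ?_)
    simpa using sub_mem hβ hinv

theorem stmt2_general (R S K L : Type*) [CommRing R] [CommRing S]
    [Field K] [Field L]
    [Algebra R S]
    [Algebra R K] [IsFractionRing R K]
    [Algebra S L]
    [Algebra R L] [Algebra K L] [IsScalarTower R S L] [IsScalarTower R K L]
    (hfg : Algebra.FiniteType R S)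
    (α : L) (halg : IsAlgebraic K α)
    (hgen : IntermediateField.adjoin K {α} = ⊤) :
    ∃ β : L, ∀ s : S, algebraMap S L s ∈ Algebra.adjoin R ({β} : Set L) := by
  obtain ⟨γ, hγ, hγK⟩ := exists_isIntegral_adjoin_eq_top (nonZeroDivisors R) halg hgen
  have hden (s : S) : ∃ d : R, algebraMap R L d ≠ 0 ∧
      algebraMap R L d * algebraMap S L s ∈ Algebra.adjoin R {γ} := by
    obtain ⟨m, hm⟩ := IsLocalization.exists_smul_mem_adjoin_of_mem_adjoin (nonZeroDivisors R)
      (hγK ▸ Algebra.mem_top : algebraMap S L s ∈ Algebra.adjoin K {γ})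
    refine ⟨m, ?_, by rwa [← Algebra.smul_def]⟩
    rw [IsScalarTower.algebraMap_apply R K L]
    exact (_root_.map_ne_zero _).mpr (IsLocalization.map_units K m).ne_zero
  obtain ⟨d, hd, hS⟩ := hfg.exists_forall_mem_adjoin_insert_inv hden
  exact ⟨γ + (algebraMap R L d)⁻¹, fun s => hγ.adjoin_add_inv_eq_adjoin_pair hd ▸ hS s⟩

theorem stmt2 (R S K L : Type*) [CommRing R] [IsDomain R] [CommRing S] [IsDomain S]
    [Field K] [Field L]
    [Algebra R S] (hinj : Function.Injective (algebraMap R S))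
    [Algebra R K] [IsFractionRing R K]
    [Algebra S L] [IsFractionRing S L]
    [Algebra R L] [Algebra K L] [IsScalarTower R S L] [IsScalarTower R K L]
    (hfg : Algebra.FiniteType R S)
    (α : L) (halg : IsAlgebraic K α)
    (hgen : IntermediateField.adjoin K {α} = ⊤) :
    ∃ β : L, ∀ s : S, algebraMap S L s ∈ Algebra.adjoin R ({β} : Set L) :=
  stmt2_general R S K L hfg α halg hgen
end

section
/- Let K be a field of characteristic p > 0 with a valuation v (a Krull valuation with values in a linearly ordered abelian group, written additively). Let f(X,Y) = X^{p+1}Y + X^{p+1}Y^{p^2} + X^{2p+1} + X. If x ∈ K^× is such that v(x) is not divisible by p in the value group, then for every y ∈ K the value v(f(x,y)) is not divisible by p; in particular f(x,y) is not a p-th power in K. -/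
/-!
Write `a = v x`, `b = v y` and `f = x^(p+1) (y + y^(p²)) + x^(2p+1) + x`. The last two terms have
values `a · (a²)^p` and `a · 1^p`, and when `b > 1` the first has value
`a^(p+1) b^(p²) = a · (a b^p)^p`: all lie in the coset `a · Γ^p`, and since `a` is not a `p`-th
power they are pairwise distinct, so `v f` is their maximum. When `b ≤ 1` the first term is at
most `a^(p+1)`, strictly below `max a a^(2p+1)` because `a ≠ 1`, so again `v f` lies in `a · Γ^p`.
-/

section PowCosets

variable {Γ₀ : Type*} [LinearOrderedCommGroupWithZero Γ₀] {a : Γ₀} {p : ℕ}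

theorem pow_lt_max_pow_of_lt_of_lt (ha₀ : a ≠ 0) (ha₁ : a ≠ 1) {m n k : ℕ} (hmn : m < n)
    (hnk : n < k) : a ^ n < max (a ^ m) (a ^ k) := by
  rcases ha₁.lt_or_gt with ha | ha
  · exact lt_max_of_lt_left (pow_lt_pow_right_of_lt_one₀ (zero_lt_iff.mpr ha₀) ha hmn)
  · exact lt_max_of_lt_right (pow_lt_pow_right₀ ha hnk)

theorem mul_pow_ne_mul_pow (hp : p ≠ 0) (ha₀ : a ≠ 0) {δ ε : Γ₀} (h : δ ≠ ε) :
    a * δ ^ p ≠ a * ε ^ p := by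
  rwa [Ne, mul_right_inj' ha₀, pow_left_inj₀ zero_le zero_le hp]

theorem not_exists_mul_pow_eq_pow (ha : ¬∃ γ : Γ₀, a = γ ^ p) {δ : Γ₀} (hδ : δ ≠ 0) :
    ¬∃ γ : Γ₀, a * δ ^ p = γ ^ p := by
  rintro ⟨γ, hγ⟩
  exact ha ⟨γ * δ⁻¹, by rw [mul_pow, inv_pow, eq_mul_inv_iff_mul_eq₀ (pow_ne_zero _ hδ), hγ]⟩

end PowCosets

namespace Valuation

variable {K Γ₀ : Type*} [Ring K] [LinearOrderedCommGroupWithZero Γ₀] (v : Valuation K Γ₀)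

theorem map_add_add_of_pairwise_ne {s t u : K} (hst : v s ≠ v t) (hsu : v s ≠ v u)
    (htu : v t ≠ v u) : v (s + t + u) = max (max (v s) (v t)) (v u) := by
  have hs : v (s + t) = max (v s) (v t) := v.map_add_of_distinct_val hst
  rw [v.map_add_of_distinct_val (hs ▸ max_rec' (· ≠ v u) hsu htu), hs]

theorem map_add_pow_le_one {y : K} (hy : v y ≤ 1) (n : ℕ) : v (y + y ^ n) ≤ 1 :=
  v.map_add_le hy (by rw [map_pow]; exact pow_le_one₀ zero_le hy)

theorem map_add_pow_of_one_lt {y : K} (hy : 1 < v y) {n : ℕ} (hn : 1 < n) :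
    v (y + y ^ n) = v y ^ n := by
  rw [v.map_add_eq_of_lt_right, map_pow]
  simpa [map_pow] using pow_lt_pow_right₀ hy hn

theorem map_pow_succ_mul_add_pow_lt {x y : K} (hx₀ : v x ≠ 0) (hx₁ : v x ≠ 1) (hy : v y ≤ 1)
    {p : ℕ} (hp : p ≠ 0) (n : ℕ) :
    v (x ^ (p + 1) * (y + y ^ n)) < max (v x) (v (x ^ (2 * p + 1))) := by
  rw [map_mul, map_pow, map_pow]
  calc v x ^ (p + 1) * v (y + y ^ n)
      ≤ v x ^ (p + 1) := mul_le_of_le_one_right' (v.map_add_pow_le_one hy n)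
    _ < max (v x ^ 1) (v x ^ (2 * p + 1)) :=
      pow_lt_max_pow_of_lt_of_lt hx₀ hx₁ (by omega) (by omega)
    _ = max (v x) (v x ^ (2 * p + 1)) := by rw [pow_one]

theorem exists_map_eq_mul_pow {p : ℕ} (hp : p ≠ 0) {x : K} (hvx : ¬∃ γ : Γ₀, v x = γ ^ p)
    (y : K) : ∃ δ ≠ 0,
      v (x ^ (p + 1) * y + x ^ (p + 1) * y ^ (p ^ 2) + x ^ (2 * p + 1) + x) = v x * δ ^ p := by
  have hp₁ : p ≠ 1 := by rintro rfl; exact hvx ⟨v x, (pow_one _).symm⟩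
  have hx₀ : v x ≠ 0 := fun h => hvx ⟨0, by rw [h, zero_pow hp]⟩
  have hx₁ : v x ≠ 1 := fun h => hvx ⟨1, by rw [h, one_pow]⟩
  have hv₃ : v (x ^ (2 * p + 1)) = v x * (v x ^ 2) ^ p := by
    rw [map_pow, ← pow_mul, pow_succ']
  have hv₄ : v x = v x * 1 ^ p := by rw [one_pow, mul_one]
  have h₃₄ : v (x ^ (2 * p + 1)) ≠ v x := by
    rw [hv₃]
    conv_rhs => rw [hv₄]
    exact mul_pow_ne_mul_pow hp hx₀ fun h =>
      hx₁ ((pow_eq_one_iff_of_nonneg zero_le two_ne_zero).mp h)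
  rw [← mul_add]
  rcases le_or_gt (v y) 1 with hy | hy
  · have hlt : v (x ^ (p + 1) * (y + y ^ (p ^ 2))) < v (x ^ (2 * p + 1) + x) := by
      rw [v.map_add_of_distinct_val h₃₄, max_comm]
      exact v.map_pow_succ_mul_add_pow_lt hx₀ hx₁ hy hp _
    rw [add_assoc, v.map_add_eq_of_lt_right hlt, v.map_add_of_distinct_val h₃₄]
    exact max_rec' (∃ δ ≠ 0, · = v x * δ ^ p) ⟨_, pow_ne_zero 2 hx₀, hv₃⟩ ⟨1, one_ne_zero, hv₄⟩
  · have hv₂ : v (x ^ (p + 1) * (y + y ^ (p ^ 2))) = v x * (v x * v y ^ p) ^ p := by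
      rw [map_mul, map_pow, v.map_add_pow_of_one_lt hy (Nat.one_lt_pow two_ne_zero (by omega)),
        mul_pow, ← pow_mul, ← sq, pow_succ', mul_assoc]
    have h₂₃ : v (x ^ (p + 1) * (y + y ^ (p ^ 2))) ≠ v (x ^ (2 * p + 1)) := by
      rw [hv₂, hv₃]
      refine mul_pow_ne_mul_pow hp hx₀ fun h => hvx ⟨v y, ?_⟩
      exact (mul_left_cancel₀ hx₀ (h.trans (sq _))).symm
    have h₂₄ : v (x ^ (p + 1) * (y + y ^ (p ^ 2))) ≠ v x := by
      rw [hv₂]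
      conv_rhs => rw [hv₄]
      refine mul_pow_ne_mul_pow hp hx₀ fun h => hvx ⟨(v y)⁻¹, ?_⟩
      rw [inv_pow]
      exact eq_inv_of_mul_eq_one_left h
    have hy₀ : v y ≠ 0 := (zero_lt_one.trans hy).ne'
    rw [v.map_add_add_of_pairwise_ne h₂₃ h₂₄ h₃₄]
    refine max_rec' (∃ δ ≠ 0, · = v x * δ ^ p) (max_rec' (∃ δ ≠ 0, · = v x * δ ^ p) ?_ ?_)
      ⟨1, one_ne_zero, hv₄⟩
    · exact ⟨_, mul_ne_zero hx₀ (pow_ne_zero p hy₀), hv₂⟩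
    · exact ⟨_, pow_ne_zero 2 hx₀, hv₃⟩

end Valuation

theorem stmt3_general (K : Type*) [Field K] (p : ℕ) (hp : p.Prime)
    (Γ₀ : Type*) [LinearOrderedCommGroupWithZero Γ₀] (v : Valuation K Γ₀)
    (x : K) (hvx : ¬ ∃ γ : Γ₀, v x = γ ^ p) (y : K) :
    (¬ ∃ γ : Γ₀, v (x ^ (p + 1) * y + x ^ (p + 1) * y ^ (p ^ 2) + x ^ (2 * p + 1) + x) = γ ^ p) ∧
      ¬ ∃ z : K, z ^ p = x ^ (p + 1) * y + x ^ (p + 1) * y ^ (p ^ 2) + x ^ (2 * p + 1) + x := by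
  obtain ⟨δ, hδ, hvf⟩ := v.exists_map_eq_mul_pow hp.ne_zero hvx y
  have hval : ¬ ∃ γ : Γ₀,
      v (x ^ (p + 1) * y + x ^ (p + 1) * y ^ (p ^ 2) + x ^ (2 * p + 1) + x) = γ ^ p :=
    hvf ▸ not_exists_mul_pow_eq_pow hvx hδ
  exact ⟨hval, fun ⟨z, hz⟩ => hval ⟨v z, by rw [← hz, map_pow]⟩⟩

theorem stmt3 (K : Type*) [Field K] (p : ℕ) (hp : p.Prime) [CharP K p]
    (Γ₀ : Type*) [LinearOrderedCommGroupWithZero Γ₀] (v : Valuation K Γ₀)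
    (x : K) (hx : x ≠ 0) (hvx : ¬ ∃ γ : Γ₀, v x = γ ^ p) (y : K) :
    (¬ ∃ γ : Γ₀, v (x ^ (p + 1) * y + x ^ (p + 1) * y ^ (p ^ 2) + x ^ (2 * p + 1) + x) = γ ^ p) ∧
      ¬ ∃ z : K, z ^ p = x ^ (p + 1) * y + x ^ (p + 1) * y ^ (p ^ 2) + x ^ (2 * p + 1) + x :=
  stmt3_general K p hp Γ₀ v x hvx y
end

section
/- Let K be a field of characteristic p > 0 and f(X,Y) = X^{p+1}Y + X^{p+1}Y^{p^2} + X^{2p+1} + X. If x ∈ K is a nonzero p-th power and f(x,y) is a p-th power in K, then y is a p-th power in K. -/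
theorem stmt4 (K : Type*) [Field K] (p : ℕ) (hp : p.Prime) [CharP K p]
    (x y : K) (hx0 : x ≠ 0) (hx : ∃ a : K, a ^ p = x)
    (hf : ∃ b : K, b ^ p = x ^ (p + 1) * y + x ^ (p + 1) * y ^ (p ^ 2) + x ^ (2 * p + 1) + x) :
    ∃ c : K, c ^ p = y := by
  haveI := Fact.mk hp
  obtain ⟨a, ha⟩ := hx
  obtain ⟨b, hb⟩ := hf
  have ha0 : a ≠ 0 := by
    rintro rfl
    apply hx0
    rw [← ha, zero_pow hp.ne_zero]
  refine ⟨(b - a ^ (p + 1) * y ^ p - x ^ 2 * a - a) / a ^ (p + 1), ?_⟩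
  have key : (b - a ^ (p + 1) * y ^ p - x ^ 2 * a - a) ^ p
      = b ^ p - (a ^ (p + 1)) ^ p * (y ^ p) ^ p - (x ^ 2 * a) ^ p - a ^ p := by
    rw [sub_pow_char, sub_pow_char, sub_pow_char, mul_pow]
  have hap : (a ^ (p + 1)) ^ p = x ^ (p + 1) := by
    rw [← pow_mul, mul_comm, pow_mul, ha]
  have hyp : (y ^ p) ^ p = y ^ (p ^ 2) := by rw [← pow_mul, pow_two]
  have hx2 : (x ^ 2 * a) ^ p = x ^ (2 * p + 1) := by
    rw [mul_pow, ← pow_mul, ha, pow_succ, mul_comm 2 p, mul_comm p 2]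
  rw [div_pow, key, hb, hap, hyp, hx2, ha]
  field_simp
  ring
end

section
/- Let K be a field and q an anisotropic quadratic form on K^m. Then q remains anisotropic over the rational function field K(t): if f₁, …, f_m ∈ K(t) satisfy q(f₁, …, f_m) = 0 (evaluating q with coefficients viewed in K(t)), then f₁ = ⋯ = f_m = 0. -/
open Polynomial

private lemma poly_aniso (K : Type*) [Field K] (m : ℕ) (c : Fin m → Fin m → K)
    (hq : ∀ v : Fin m → K, ∑ i, ∑ j, c i j * v i * v j = 0 → v = 0) :
    ∀ (n : ℕ) (g : Fin m → K[X]), (∀ i, (g i).natDegree ≤ n) →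
      ∑ i, ∑ j, C (c i j) * g i * g j = 0 → g = 0 := by
  intro n
  induction n using Nat.strong_induction_on with
  | _ n ih =>
    intro g hdeg hsum
    have hcoeff : ∀ i, (g i).coeff n = 0 := by
      have h2n : (∑ i, ∑ j, C (c i j) * g i * g j).coeff (n + n) = 0 := by
        rw [hsum]; simp
      rw [Polynomial.finset_sum_coeff] at h2n
      have heq : ∀ i ∈ Finset.univ, (∑ j, C (c i j) * g i * g j).coeff (n + n)
          = ∑ j, c i j * (g i).coeff n * (g j).coeff n := by
        intro i _
        rw [Polynomial.finset_sum_coeff]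
        refine Finset.sum_congr rfl fun j _ => ?_
        rw [mul_assoc, Polynomial.coeff_C_mul,
          Polynomial.coeff_mul_add_eq_of_natDegree_le (hdeg i) (hdeg j), mul_assoc]
      rw [Finset.sum_congr rfl heq] at h2n
      have := hq (fun i => (g i).coeff n) h2n
      exact fun i => congrFun this i
    match n with
    | 0 =>
      funext i
      have := Polynomial.eq_C_of_natDegree_le_zero (hdeg i)
      rw [this, hcoeff i, map_zero, Pi.zero_apply]
    | Nat.succ k =>
      refine ih k (Nat.lt_succ_self k) g (fun i => ?_) hsum
      rw [Polynomial.natDegree_le_iff_coeff_eq_zero]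
      intro M hM
      rcases eq_or_lt_of_le (Nat.succ_le_of_lt hM) with h | h
      · rw [← h]; exact hcoeff i
      · exact Polynomial.coeff_eq_zero_of_natDegree_lt (lt_of_le_of_lt (hdeg i) h)

theorem stmt9 (K : Type*) [Field K] (m : ℕ) (c : Fin m → Fin m → K)
    (hq : ∀ v : Fin m → K, ∑ i, ∑ j, c i j * v i * v j = 0 → v = 0)
    (f : Fin m → RatFunc K)
    (hf : ∑ i, ∑ j, algebraMap K (RatFunc K) (c i j) * f i * f j = 0) :
    f = 0 := by
  obtain ⟨b, hb⟩ := IsLocalization.exist_integer_multiples_of_finite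
    (nonZeroDivisors K[X]) f
  choose g hg using hb
  have hb0 : algebraMap K[X] (RatFunc K) (b : K[X]) ≠ 0 := by
    simpa using nonZeroDivisors.coe_ne_zero b
  -- key: sum over g is 0
  have key : ∑ i, ∑ j, C (c i j) * g i * g j = 0 := by
    apply IsFractionRing.injective K[X] (RatFunc K)
    rw [map_zero]
    push_cast [map_sum, map_mul]
    have : ∀ i, algebraMap K[X] (RatFunc K) (g i)
        = algebraMap K[X] (RatFunc K) (b : K[X]) * f i := fun i => by
      rw [hg i, Algebra.smul_def]
    calc ∑ i, ∑ j, algebraMap K[X] (RatFunc K) (C (c i j))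
          * algebraMap K[X] (RatFunc K) (g i) * algebraMap K[X] (RatFunc K) (g j)
        = (algebraMap K[X] (RatFunc K) (b : K[X]))^2
          * ∑ i, ∑ j, algebraMap K (RatFunc K) (c i j) * f i * f j := by
          rw [Finset.mul_sum]
          refine Finset.sum_congr rfl fun i _ => ?_
          rw [Finset.mul_sum]
          refine Finset.sum_congr rfl fun j _ => ?_
          rw [this i, this j]
          have hC : (algebraMap K[X] (RatFunc K)) (C (c i j))
              = algebraMap K (RatFunc K) (c i j) := by
            simp [RatFunc.algebraMap_C]
          rw [hC]; ring
      _ = 0 := by rw [hf, mul_zero]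
  have hg0 : g = 0 := poly_aniso K m c hq (Finset.univ.sup fun i => (g i).natDegree) g
    (fun i => Finset.le_sup (f := fun i => (g i).natDegree) (Finset.mem_univ i)) key
  funext i
  have : algebraMap K[X] (RatFunc K) (b : K[X]) * f i = 0 := by
    rw [← Algebra.smul_def, ← hg i, hg0, Pi.zero_apply, map_zero]
  rcases mul_eq_zero.mp this with h | h
  · exact absurd h hb0
  · simpa using h
end

section
/- Let K ⊆ F and K ⊆ L be field extensions inside a common field, with F and L linearly disjoint over K, and suppose K is existentially closed in F (every finite system of polynomial equations and inequations over K with a solution in F has a solution in K). Then in the compositum FL, the field L is existentially closed in FL, provided F embeds over K into an ultrapower K* of K. Concretely, prove the algebraic core: if ι : F → K* is a K-embedding into an elementary extension K* of K, then inside the compositum L* ⊇ L, K*, the fields K* and L are linearly disjoint over K. -/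
theorem stmt14 (K L F : Type*) [Field K] [Field L] [Field F] [Algebra K L] [Algebra K F]
    (hKF : Function.Injective (algebraMap K F))
    (I : Type*) (𝒰 : Ultrafilter I)
    (ι : F →+* Filter.Germ (𝒰 : Filter I) K)
    (hι : ∀ a : K, ι (algebraMap K F a) = (↑a : Filter.Germ (𝒰 : Filter I) K))
    (m : ℕ) (v : Fin m → L) (hv : LinearIndependent K v)
    (c : Fin m → Filter.Germ (𝒰 : Filter I) K)
    (hc : ∑ i, (c i).map (algebraMap K L) * (↑(v i) : Filter.Germ (𝒰 : Filter I) L) = 0) :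
    ∀ i, c i = 0 := by
  -- choose representatives
  choose f hf using fun i => Quotient.exists_rep (c i)
  have key : ∀ i, (c i).map (algebraMap K L) * (↑(v i) : Filter.Germ (𝒰 : Filter I) L)
      = Filter.Germ.ofFun (fun x => algebraMap K L (f i x) * v i) := by
    intro i
    rw [← hf i]
    rfl
  rw [Finset.sum_congr rfl (fun i _ => key i)] at hc
  have hsum : (Filter.Germ.ofFun (fun x => ∑ i, algebraMap K L (f i x) * v i)
      : Filter.Germ (𝒰 : Filter I) L) = 0 := by
    rw [← hc]
    have : ∀ g : Fin m → (I → L), (Filter.Germ.ofFun (∑ i, g i) : Filter.Germ (𝒰 : Filter I) L)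
        = ∑ i, Filter.Germ.ofFun (g i) :=
      fun g => map_sum (Filter.Germ.coeRingHom (𝒰 : Filter I)) g Finset.univ
    rw [show (fun x => ∑ i, algebraMap K L (f i x) * v i)
        = ∑ i, (fun x => algebraMap K L (f i x) * v i) from by ext x; simp, this]
  have h0 : ∀ᶠ x in (𝒰 : Filter I), ∑ i, algebraMap K L (f i x) * v i = 0 := by
    have := Filter.Germ.coe_eq.mp hsum
    exact this
  intro i
  rw [← hf i]
  change (Filter.Germ.ofFun (f i) : Filter.Germ (𝒰 : Filter I) K) = 0
  rw [show (0 : Filter.Germ (𝒰 : Filter I) K) = Filter.Germ.ofFun (fun _ => 0) from rfl,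
    Filter.Germ.coe_eq]
  filter_upwards [h0] with x hx
  have := linearIndependent_iff'.mp hv Finset.univ (fun j => f j x) (by
    simpa [Algebra.smul_def] using hx) i (Finset.mem_univ i)
  exact this
end
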